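/- Let d ≥ 2 and let a = (a_1, …, a_d) be a probability vector with a_1 ≥ … ≥ a_d > 0, and let k < d be such that a_1 = a_k > a_{k+1}. Define ψ(s) = log(∑_{i=1}^d a_i^s). Then the function s ↦ ψ(s) − s·ψ'(s) is strictly decreasing on (0, ∞), lim_{s→∞} (ψ(s) − s·ψ'(s)) = log k, and consequently ψ(s) − s·ψ'(s) > log k for every s > 0. -/

import Mathlib

open Finset

/-- `ψ(s) = log (∑ i, a i ^ s)` (real powers, natural logarithm). -/
noncomputable def psiFn {d : ℕ} (a : Fin d → ℝ) (s : ℝ) : ℝ :=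
  Real.log (∑ i, a i ^ s)

/-- The derivative `ψ'(s) = (∑ i, a i ^ s * log (a i)) / (∑ i, a i ^ s)`. -/
noncomputable def psiDeriv {d : ℕ} (a : Fin d → ℝ) (s : ℝ) : ℝ :=
  (∑ i, a i ^ s * Real.log (a i)) / (∑ i, a i ^ s)

noncomputable def Zf {d : ℕ} (a : Fin d → ℝ) (s : ℝ) : ℝ := ∑ i, a i ^ s
noncomputable def Z1f {d : ℕ} (a : Fin d → ℝ) (s : ℝ) : ℝ := ∑ i, a i ^ s * Real.log (a i)
noncomputable def Z2f {d : ℕ} (a : Fin d → ℝ) (s : ℝ) : ℝ := ∑ i, a i ^ s * Real.log (a i) ^ 2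

lemma Zf_pos {d : ℕ} (a : Fin d → ℝ) (hd : 0 < d) (ha : ∀ i, 0 < a i) (s : ℝ) :
    0 < Zf a s := by
  have : Nonempty (Fin d) := ⟨⟨0, hd⟩⟩
  exact Finset.sum_pos (fun i _ => Real.rpow_pos_of_pos (ha i) s) Finset.univ_nonempty

lemma hasDerivAt_Zf {d : ℕ} (a : Fin d → ℝ) (ha : ∀ i, 0 < a i) (s : ℝ) :
    HasDerivAt (Zf a) (Z1f a s) s := by
  unfold Zf Z1f
  exact HasDerivAt.fun_sum fun i _ => (Real.hasStrictDerivAt_const_rpow (ha i) s).hasDerivAt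

lemma hasDerivAt_Z1f {d : ℕ} (a : Fin d → ℝ) (ha : ∀ i, 0 < a i) (s : ℝ) :
    HasDerivAt (Z1f a) (Z2f a s) s := by
  unfold Z1f Z2f
  have h := HasDerivAt.fun_sum (u := Finset.univ)
    (fun i (_ : i ∈ Finset.univ) =>
      ((Real.hasStrictDerivAt_const_rpow (ha i) s).hasDerivAt.mul_const (Real.log (a i))))
  have e : (∑ i : Fin d, a i ^ s * Real.log (a i) ^ 2)
      = ∑ i : Fin d, a i ^ s * Real.log (a i) * Real.log (a i) :=
    Finset.sum_congr rfl fun i _ => by ring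
  rw [e]; exact h

lemma hasDerivAt_f {d : ℕ} (a : Fin d → ℝ) (hd : 0 < d) (ha : ∀ i, 0 < a i) (s : ℝ) :
    HasDerivAt (fun s => psiFn a s - s * psiDeriv a s)
      (-(s * ((Z2f a s * Zf a s - Z1f a s ^ 2) / Zf a s ^ 2))) s := by
  have hZ := (Zf_pos a hd ha s).ne'
  have h1 : HasDerivAt (fun t => Real.log (Zf a t)) (Z1f a s / Zf a s) s :=
    (hasDerivAt_Zf a ha s).log hZ
  have h2 : HasDerivAt (fun t => Z1f a t / Zf a t)
      ((Z2f a s * Zf a s - Z1f a s * Z1f a s) / Zf a s ^ 2) s :=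
    (hasDerivAt_Z1f a ha s).div (hasDerivAt_Zf a ha s) hZ
  have h3 : HasDerivAt (fun t => t * (Z1f a t / Zf a t))
      (1 * (Z1f a s / Zf a s) + s * ((Z2f a s * Zf a s - Z1f a s * Z1f a s) / Zf a s ^ 2)) s :=
    (hasDerivAt_id s).mul h2
  have h4 := h1.fun_sub h3
  have heq : (fun s => psiFn a s - s * psiDeriv a s)
      = fun t => Real.log (Zf a t) - t * (Z1f a t / Zf a t) := rfl
  rw [heq]
  refine h4.congr_deriv ?_
  ring

lemma var_pos {d : ℕ} (a : Fin d → ℝ) (hd : 0 < d) (ha : ∀ i, 0 < a i)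
    (i0 j0 : Fin d) (hlt : a j0 < a i0) (s : ℝ) :
    0 < Z2f a s * Zf a s - Z1f a s ^ 2 := by
  have hZ := Zf_pos a hd ha s
  set m := Z1f a s / Zf a s with hm
  have expand : (∑ i, a i ^ s * (Real.log (a i) - m) ^ 2)
      = Z2f a s - 2 * m * Z1f a s + m ^ 2 * Zf a s := by
    unfold Z2f Z1f Zf
    rw [Finset.mul_sum, Finset.mul_sum, ← Finset.sum_sub_distrib, ← Finset.sum_add_distrib]
    exact Finset.sum_congr rfl fun i _ => by ring
  have key : Z2f a s * Zf a s - Z1f a s ^ 2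
      = Zf a s * ∑ i, a i ^ s * (Real.log (a i) - m) ^ 2 := by
    rw [expand, hm]
    field_simp
    ring
  rw [key]
  refine mul_pos hZ ?_
  have hnonneg : ∀ i ∈ Finset.univ, (0:ℝ) ≤ a i ^ s * (Real.log (a i) - m) ^ 2 :=
    fun i _ => mul_nonneg (Real.rpow_pos_of_pos (ha i) s).le (sq_nonneg _)
  have hlog : Real.log (a j0) < Real.log (a i0) := Real.log_lt_log (ha j0) hlt
  rcases eq_or_ne (Real.log (a i0)) m with h | h
  · refine Finset.sum_pos' hnonneg ⟨j0, Finset.mem_univ _, ?_⟩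
    exact mul_pos (Real.rpow_pos_of_pos (ha j0) s)
      (pow_two_pos_of_ne_zero (sub_ne_zero.mpr (by rw [← h]; exact hlog.ne)))
  · refine Finset.sum_pos' hnonneg ⟨i0, Finset.mem_univ _, ?_⟩
    exact mul_pos (Real.rpow_pos_of_pos (ha i0) s)
      (pow_two_pos_of_ne_zero (sub_ne_zero.mpr h))

theorem stmt_5 {d : ℕ} (hd : 2 ≤ d) (a : Fin d → ℝ)
    (ha_pos : ∀ i, 0 < a i)
    (ha_anti : ∀ i j : Fin d, i ≤ j → a j ≤ a i)
    (ha_sum : ∑ i, a i = 1)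
    (k : ℕ) (hk1 : 1 ≤ k) (hkd : k < d)
    (hak : a ⟨0, by omega⟩ = a ⟨k - 1, by omega⟩)
    (hlt : a ⟨k, hkd⟩ < a ⟨k - 1, by omega⟩) :
    StrictAntiOn (fun s => psiFn a s - s * psiDeriv a s) (Set.Ioi (0 : ℝ)) ∧
    Filter.Tendsto (fun s => psiFn a s - s * psiDeriv a s) Filter.atTop
      (nhds (Real.log k)) ∧
    (∀ s : ℝ, 0 < s → Real.log k < psiFn a s - s * psiDeriv a s) := by
  have hd0 : 0 < d := by omega
  have hlt0 : a ⟨k, hkd⟩ < a ⟨0, by omega⟩ := by rw [hak]; exact hlt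
  -- Part 1: strict antitonicity
  have part1 : StrictAntiOn (fun s => psiFn a s - s * psiDeriv a s) (Set.Ioi (0 : ℝ)) := by
    apply strictAntiOn_of_deriv_neg (convex_Ioi 0)
    · exact fun x _ => (hasDerivAt_f a hd0 ha_pos x).continuousAt.continuousWithinAt
    · intro x hx
      rw [interior_Ioi] at hx
      rw [(hasDerivAt_f a hd0 ha_pos x).deriv]
      have hV := var_pos a hd0 ha_pos ⟨0, by omega⟩ ⟨k, hkd⟩ hlt0 x
      have hZ := Zf_pos a hd0 ha_pos x
      have : 0 < x * ((Z2f a x * Zf a x - Z1f a x ^ 2) / Zf a x ^ 2) :=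
        mul_pos hx (div_pos hV (pow_pos hZ 2))
      linarith
  -- setup for the limit
  set M : ℝ := a ⟨0, by omega⟩ with hM_def
  have hM : 0 < M := ha_pos _
  set b : Fin d → ℝ := fun i => a i / M with hb_def
  have hb_pos : ∀ i, 0 < b i := fun i => div_pos (ha_pos i) hM
  have hb_le : ∀ i, a i ≤ M := fun i => ha_anti ⟨0, by omega⟩ i (by simp [Fin.le_def])
  have hb1 : ∀ i : Fin d, (i : ℕ) < k → b i = 1 := by
    intro i hi
    have h1 : a i ≤ M := hb_le i
    have h2 : a ⟨k - 1, by omega⟩ ≤ a i := ha_anti i ⟨k - 1, by omega⟩ (by simp [Fin.le_def]; omega)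
    have : a i = M := le_antisymm h1 (hak ▸ h2)
    simp [hb_def, this, div_self hM.ne']
  have hblt : ∀ i : Fin d, k ≤ (i : ℕ) → b i < 1 := by
    intro i hi
    have h1 : a i ≤ a ⟨k, hkd⟩ := ha_anti ⟨k, hkd⟩ i (by simp [Fin.le_def]; omega)
    have : a i < M := lt_of_le_of_lt h1 hlt0
    rw [hb_def]
    exact (div_lt_one hM).mpr this
  set W : ℝ → ℝ := fun s => ∑ i, b i ^ s with hW_def
  have hWpos : ∀ s, 0 < W s := by
    intro s
    have : Nonempty (Fin d) := ⟨⟨0, hd0⟩⟩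
    exact Finset.sum_pos (fun i _ => Real.rpow_pos_of_pos (hb_pos i) s) Finset.univ_nonempty
  -- the key identity
  have ident : ∀ s : ℝ, psiFn a s - s * psiDeriv a s
      = Real.log (W s) - (∑ i, s * (b i ^ s * Real.log (b i))) / W s := by
    intro s
    have hMs : (0:ℝ) < M ^ s := Real.rpow_pos_of_pos hM s
    have habs : ∀ i, a i ^ s = M ^ s * b i ^ s := by
      intro i
      rw [hb_def]
      rw [Real.div_rpow (ha_pos i).le hM.le]
      field_simp
    have hZeq : (∑ i, a i ^ s) = M ^ s * W s := by
      rw [hW_def, Finset.mul_sum]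
      exact Finset.sum_congr rfl fun i _ => habs i
    have hZ1eq : (∑ i, a i ^ s * Real.log (a i))
        = M ^ s * (Real.log M * W s + ∑ i, b i ^ s * Real.log (b i)) := by
      rw [hW_def, mul_add, ← mul_assoc, mul_comm (M ^ s) (Real.log M), mul_assoc,
        Finset.mul_sum, Finset.mul_sum, Finset.mul_sum, ← Finset.sum_add_distrib]
      refine Finset.sum_congr rfl fun i _ => ?_
      have hlogi : Real.log (a i) = Real.log M + Real.log (b i) := by
        rw [hb_def]
        rw [Real.log_div (ha_pos i).ne' hM.ne']
        ring
      rw [hlogi, habs i]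
      ring
    unfold psiFn psiDeriv
    rw [hZeq, hZ1eq, Real.log_mul hMs.ne' (hWpos s).ne', Real.log_rpow hM,
      mul_div_mul_left _ _ hMs.ne', ← Finset.mul_sum]
    have hW := (hWpos s).ne'
    field_simp
    ring
  -- limit of W
  have hWlim : Filter.Tendsto W Filter.atTop (nhds (k : ℝ)) := by
    have hsum : (∑ i : Fin d, (if (i : ℕ) < k then (1:ℝ) else 0)) = k := by
      rw [Fin.sum_univ_eq_sum_range (fun i => if i < k then (1:ℝ) else 0) d]
      rw [Finset.range_eq_Ico, ← Finset.sum_Ico_consecutive _ (Nat.zero_le k) hkd.le]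
      have h1 : (∑ i ∈ Finset.Ico 0 k, (if i < k then (1:ℝ) else 0)) = k := by
        rw [Finset.sum_congr rfl (fun i hi => if_pos (Finset.mem_Ico.mp hi).2)]
        simp
      have h2 : (∑ i ∈ Finset.Ico k d, (if i < k then (1:ℝ) else 0)) = 0 := by
        rw [Finset.sum_congr rfl (fun i hi => if_neg (by
          have := (Finset.mem_Ico.mp hi).1; omega))]
        simp
      rw [h1, h2, add_zero]
    rw [hW_def, ← hsum]
    apply tendsto_finset_sum
    intro i _
    by_cases hik : (i : ℕ) < k
    · rw [if_pos hik]
      exact tendsto_const_nhds.congr fun t => by rw [hb1 i hik, Real.one_rpow]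
    · rw [if_neg hik]
      exact tendsto_rpow_atTop_of_base_lt_one (b i)
        (by linarith [hb_pos i]) (hblt i (by omega))
  -- limit of the correction term
  have hcorr : Filter.Tendsto (fun s => ∑ i, s * (b i ^ s * Real.log (b i)))
      Filter.atTop (nhds 0) := by
    have : (0:ℝ) = ∑ i : Fin d, (0:ℝ) := by simp
    rw [this]
    apply tendsto_finset_sum
    intro i _
    by_cases hik : (i : ℕ) < k
    · have : (fun s : ℝ => s * (b i ^ s * Real.log (b i))) = fun _ => (0:ℝ) := by
        funext s; rw [hb1 i hik]; simp
      rw [this]; exact tendsto_const_nhds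
    · have hbi1 : b i < 1 := hblt i (by omega)
      have hbi0 : 0 < b i := hb_pos i
      have hlogneg : Real.log (b i) < 0 := Real.log_neg hbi0 hbi1
      set c : ℝ := -Real.log (b i) with hc_def
      have hc : 0 < c := by simp only [hc_def]; linarith
      have base : Filter.Tendsto (fun x : ℝ => x ^ 1 * Real.exp (-x))
          Filter.atTop (nhds 0) := Real.tendsto_pow_mul_exp_neg_atTop_nhds_zero 1
      have hcomp : Filter.Tendsto (fun s : ℝ => c * s)
          Filter.atTop Filter.atTop := Filter.Tendsto.const_mul_atTop hc Filter.tendsto_id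
      have h2 : Filter.Tendsto (fun s : ℝ => (c * s) ^ 1 * Real.exp (-(c * s)))
          Filter.atTop (nhds 0) := base.comp hcomp
      have h3 : Filter.Tendsto (fun s : ℝ => -((c * s) ^ 1 * Real.exp (-(c * s))))
          Filter.atTop (nhds 0) := by simpa using h2.neg
      have key : ∀ s : ℝ, s * (b i ^ s * Real.log (b i))
          = -((c * s) ^ 1 * Real.exp (-(c * s))) := by
        intro s
        have hlb : Real.log (b i) = -c := by simp [hc_def]
        have harg : Real.log (b i) * s = -(c * s) := by rw [hlb]; ring
        rw [Real.rpow_def_of_pos hbi0, harg, hlb, pow_one]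
        ring
      have heq : (fun s : ℝ => s * (b i ^ s * Real.log (b i)))
          = fun s : ℝ => -((c * s) ^ 1 * Real.exp (-(c * s))) := funext key
      rw [heq]
      exact h3
  -- Part 2: the limit
  have hk0 : (0:ℝ) < (k : ℝ) := by exact_mod_cast hk1
  have part2 : Filter.Tendsto (fun s => psiFn a s - s * psiDeriv a s) Filter.atTop
      (nhds (Real.log k)) := by
    have heq : (fun s => psiFn a s - s * psiDeriv a s)
        = fun s => Real.log (W s) - (∑ i, s * (b i ^ s * Real.log (b i))) / W s := by
      funext s; exact ident s
    rw [heq]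
    have h1 : Filter.Tendsto (fun s => Real.log (W s)) Filter.atTop
        (nhds (Real.log k)) := hWlim.log hk0.ne'
    have h2 : Filter.Tendsto (fun s => (∑ i, s * (b i ^ s * Real.log (b i))) / W s)
        Filter.atTop (nhds (0 / (k : ℝ))) := hcorr.div hWlim hk0.ne'
    rw [zero_div] at h2
    simpa using h1.sub h2
  refine ⟨part1, part2, ?_⟩
  -- Part 3
  intro s hs
  have hs1 : s + 1 ∈ Set.Ioi (0:ℝ) := by simp; linarith
  have hstep : (fun s => psiFn a s - s * psiDeriv a s) (s + 1)
      < (fun s => psiFn a s - s * psiDeriv a s) s :=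
    part1 hs hs1 (by linarith)
  have hge : Real.log k ≤ (fun s => psiFn a s - s * psiDeriv a s) (s + 1) := by
    apply le_of_tendsto part2
    filter_upwards [Filter.eventually_ge_atTop (s + 1)] with t ht
    exact part1.antitoneOn hs1 (by simp; linarith) ht
  simpa using lt_of_le_of_lt hge hstep
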